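/- arXiv:1211.3266 — 2 statements merged into one kernel-verified Lean document; each statement's English description precedes it below -/
import Mathlib

section
/- If ξ ∈ H is square-integrable, then the linear map ⟪ξ| : H → L²(G) sending η to the coefficient function t ↦ ⟨γ_tξ, η⟩ is a bounded operator, and its Hilbert-space adjoint |ξ⟫ := (⟪ξ|)* : L²(G) → H satisfies |ξ⟫f = ∫ f(t) γ_tξ dμ(t) (Bochner integral) for every f ∈ C_c(G). (Hilbert-space, group case of the construction of the bra-ket operators in Section 3.) -/
open MeasureTheory

noncomputable section

variable {G : Type*} [Group G] [TopologicalSpace G] [IsTopologicalGroup G]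
  [MeasurableSpace G] [BorelSpace G] [LocallyCompactSpace G] [T2Space G]
  {H : Type*} [NormedAddCommGroup H] [InnerProductSpace ℂ H] [CompleteSpace H]

/-- A vector `ξ` is square-integrable (for the strongly continuous unitary representation `γ`)
if all coefficient functions `t ↦ ⟨γ_t ξ, η⟩` belong to `L²(G,μ)`. -/
def SqInt (μ : Measure G) (γ : G → H →L[ℂ] H) (ξ : H) : Prop :=
  ∀ η : H, MemLp (fun t => (inner ℂ (γ t ξ) η : ℂ)) 2 μ

/-- `T` is the "bra" operator `⟪ξ|` of `ξ`: a bounded operator `H → L²(G)` whose value at `η`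
is (a.e.) the coefficient function `t ↦ ⟨γ_t ξ, η⟩`. -/
def IsBra (μ : Measure G) (γ : G → H →L[ℂ] H) (ξ : H) (T : H →L[ℂ] Lp ℂ 2 μ) : Prop :=
  ∀ η : H, ⇑(T η) =ᵐ[μ] fun t => (inner ℂ (γ t ξ) η : ℂ)

section CoefficientOperator

variable {α : Type*} [MeasurableSpace α] {μ : Measure α} {p : ENNReal}
  {𝕜 : Type*} [RCLike 𝕜] {E F : Type*} [NormedAddCommGroup E] [NormedSpace 𝕜 E]
  [NormedAddCommGroup F] [NormedSpace 𝕜 F]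

def coeffLinearMap (φ : α → E →L[𝕜] F) (hφ : ∀ x, MemLp (fun t => φ t x) p μ) :
    E →ₗ[𝕜] Lp F p μ where
  toFun x := (hφ x).toLp
  map_add' x y := by
    rw [← MemLp.toLp_add]
    exact MemLp.toLp_congr _ _ (.of_eq (funext fun t => map_add (φ t) x y))
  map_smul' c x := by
    rw [RingHom.id_apply, ← MemLp.toLp_const_smul]
    exact MemLp.toLp_congr _ _ (.of_eq (funext fun t => map_smul (φ t) c x))

theorem coeffLinearMap_ae_eq (φ : α → E →L[𝕜] F) (hφ : ∀ x, MemLp (fun t => φ t x) p μ)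
    (x : E) : ⇑(coeffLinearMap φ hφ x) =ᵐ[μ] fun t => φ t x :=
  (hφ x).coeFn_toLp

/-- Closed graph theorem: convergence in `Lp` gives a.e. convergence along a subsequence, so a
limit of the graph is identified pointwise through the continuity of each `φ t`. -/
theorem continuous_coeffLinearMap [Fact (1 ≤ p)] [CompleteSpace E] [CompleteSpace F]
    (φ : α → E →L[𝕜] F) (hφ : ∀ x, MemLp (fun t => φ t x) p μ) :
    Continuous (coeffLinearMap φ hφ) := by
  refine (coeffLinearMap φ hφ).continuous_of_seq_closed_graph fun u x y hu hTu => ?_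
  obtain ⟨ns, hns, hae⟩ := (tendstoInMeasure_of_tendsto_Lp hTu).exists_seq_tendsto_ae
  have hall : ∀ᵐ t ∂μ, ∀ n, coeffLinearMap φ hφ (u (ns n)) t = φ t (u (ns n)) :=
    ae_all_iff.2 fun n => coeffLinearMap_ae_eq φ hφ _
  refine (Lp.ext ?_).symm
  filter_upwards [hae, hall, coeffLinearMap_ae_eq φ hφ x] with t hy hun hx
  rw [hx]
  refine tendsto_nhds_unique ?_ hy
  simpa only [Function.comp_def, hun] using
    ((φ t).continuous.tendsto x).comp (hu.comp hns.tendsto_atTop)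

theorem exists_clm_ae_eq_of_memLp [Fact (1 ≤ p)] [CompleteSpace E] [CompleteSpace F]
    (φ : α → E →L[𝕜] F) (hφ : ∀ x, MemLp (fun t => φ t x) p μ) :
    ∃ T : E →L[𝕜] Lp F p μ, ∀ x, ⇑(T x) =ᵐ[μ] fun t => φ t x :=
  ⟨⟨coeffLinearMap φ hφ, continuous_coeffLinearMap φ hφ⟩, coeffLinearMap_ae_eq φ hφ⟩

end CoefficientOperator

theorem adjoint_apply_toLp_eq_integral {α : Type*} [MeasurableSpace α] {μ : Measure α}
    {𝕜 : Type*} [RCLike 𝕜] {E : Type*} [NormedAddCommGroup E] [InnerProductSpace 𝕜 E]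
    [NormedSpace ℝ E] [CompleteSpace E] {v : α → E} {T : E →L[𝕜] Lp 𝕜 2 μ}
    (hT : ∀ η, ⇑(T η) =ᵐ[μ] fun t => (inner 𝕜 (v t) η : 𝕜)) {f : α → 𝕜} (hf : MemLp f 2 μ)
    (hfv : Integrable (fun t => f t • v t) μ) :
    ContinuousLinearMap.adjoint T (hf.toLp f) = ∫ t, f t • v t ∂μ := by
  refine ext_inner_left 𝕜 fun w => ?_
  rw [ContinuousLinearMap.adjoint_inner_right, ← integral_inner hfv w, L2.inner_def]
  refine integral_congr_ae ?_
  filter_upwards [hT w, hf.coeFn_toLp] with t hTw hft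
  simp only [hTw, hft, RCLike.inner_apply, inner_smul_right, ← inner_conj_symm w (v t)]

theorem stmt6_general
    (μ : Measure G) [μ.IsHaarMeasure]
    (γ : G → H →L[ℂ] H)
    (hcont : ∀ ξ : H, Continuous fun t => γ t ξ)
    (ξ : H) (hξ : SqInt μ γ ξ) :
    ∃ T : H →L[ℂ] Lp ℂ 2 μ, IsBra μ γ ξ T ∧
      ∀ (f : G → ℂ) (hf : MemLp f 2 μ), Continuous f → HasCompactSupport f →
        ContinuousLinearMap.adjoint T (MemLp.toLp f hf) = ∫ t, f t • (γ t) ξ ∂μ := by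
  obtain ⟨T, hT⟩ := exists_clm_ae_eq_of_memLp (fun t => innerSL ℂ (γ t ξ)) hξ
  refine ⟨T, hT, fun f hf hfc hfs => adjoint_apply_toLp_eq_integral hT hf ?_⟩
  exact (hfc.smul (hcont ξ)).integrable_of_hasCompactSupport hfs.smul_right

/-- If `ξ` is a square-integrable vector, then the map `η ↦ (t ↦ ⟨γ_t ξ, η⟩)` is a bounded
operator `⟪ξ| : H → L²(G)`, and its Hilbert-space adjoint `|ξ⟫ = ⟪ξ|*` satisfies
`|ξ⟫ f = ∫ f(t) γ_t ξ dμ(t)` for every `f ∈ C_c(G)`. -/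
theorem stmt6
    (μ : Measure G) [μ.IsHaarMeasure]
    (γ : G → H →L[ℂ] H)
    (hone : γ 1 = ContinuousLinearMap.id ℂ H)
    (hmul : ∀ s t : G, γ (s * t) = (γ s).comp (γ t))
    (hinn : ∀ (t : G) (ξ η : H), (inner ℂ (γ t ξ) (γ t η) : ℂ) = inner ℂ ξ η)
    (hcont : ∀ ξ : H, Continuous fun t => γ t ξ)
    (ξ : H) (hξ : SqInt μ γ ξ) :
    ∃ T : H →L[ℂ] Lp ℂ 2 μ, IsBra μ γ ξ T ∧
      ∀ (f : G → ℂ) (hf : MemLp f 2 μ), Continuous f → HasCompactSupport f →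
        ContinuousLinearMap.adjoint T (MemLp.toLp f hf) = ∫ t, f t • (γ t) ξ ∂μ :=
  stmt6_general μ γ hcont ξ hξ

end
end

section
/- Suppose G is compact with normalized Haar measure μ and γ is a strongly continuous unitary representation of G on a complex Hilbert space H. Then the closed linear span of the averaged rank-one operators {∫_G γ_t∘(|ξ⟩⟨η|)∘γ_t⁻¹ dμ(t) : ξ, η ∈ H} (Bochner integrals in B(H)) equals the fixed point algebra of compact operators {x ∈ K(H) : γ_t∘x = x∘γ_t for all t ∈ G}. (Hilbert-space case of Proposition 398: for compact 𝔾, the generalized fixed point algebra Fix(E) is the ordinary fixed point algebra {x ∈ K(E) : δ(x) = x⊗1}.) -/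
/-!
Averaging over `G` with the Haar probability measure, `z ↦ ∫ γ_t z γ_t⁻¹ dμ(t)`, is a norm
contraction onto operators commuting with `γ` (left invariance of `μ`) that fixes every such
operator. Rank-one operators are mapped to compact operators commuting with `γ`, which form a closed
subspace; this gives one inclusion. Conversely, a compact `x` is a norm limit of finite sums of
rank-one operators `F` (compress `x` to the span of a finite `ε`-net of the image of the unit
ball), and if `x` commutes with `γ` then `‖x - avg F‖ = ‖avg (x - F)‖ ≤ ‖x - F‖`.
-/

open MeasureTheory InnerProductSpace ContinuousLinearMap

section CompactOperator

variable {𝕜 E F : Type*} [RCLike 𝕜] [NormedAddCommGroup E] [InnerProductSpace 𝕜 E]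
  [NormedAddCommGroup F] [InnerProductSpace 𝕜 F]

theorem isCompactOperator_rankOne (ξ : F) (η : E) : IsCompactOperator (rankOne 𝕜 ξ η) := by
  rw [rankOne_def', coe_comp]
  exact (isCompactOperator_of_locallyCompactSpace_rng (toSpanSingleton 𝕜 ξ)).comp_clm _

theorem Submodule.starProjection_comp_mem_span_rankOne [CompleteSpace E] [CompleteSpace F]
    (K : Submodule 𝕜 F) [FiniteDimensional 𝕜 K] (x : E →L[𝕜] F) :
    K.starProjection ∘L x ∈ Submodule.span 𝕜 (Set.range fun p : F × E => rankOne 𝕜 p.1 p.2) := by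
  rw [(stdOrthonormalBasis 𝕜 K).starProjection_eq_sum_rankOne, finsetSum_comp]
  exact Submodule.sum_mem _ fun i _ => Submodule.subset_span ⟨(_, _), (rankOne_comp _ _ x).symm⟩

theorem IsCompactOperator.exists_norm_sub_starProjection_comp_le {x : E →L[𝕜] F}
    (hx : IsCompactOperator x) {ε : ℝ} (hε : 0 < ε) :
    ∃ (K : Submodule 𝕜 F) (_ : FiniteDimensional 𝕜 K), ‖x - K.starProjection ∘L x‖ ≤ ε := by
  obtain ⟨s, hs, hcover⟩ := Metric.totallyBounded_iff.mp
    ((hx.isCompact_closure_image_closedBall (f := x.toLinearMap) 1).totallyBounded.subset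
      subset_closure) ε hε
  have : FiniteDimensional 𝕜 (Submodule.span 𝕜 s) := FiniteDimensional.span_of_finite 𝕜 hs
  refine ⟨_, this, opNorm_le_of_unit_norm hε.le fun ζ hζ => ?_⟩
  obtain ⟨y, hy, hxy⟩ := Set.mem_iUnion₂.mp (hcover ⟨ζ, by simp [hζ], rfl⟩)
  calc ‖(x - (Submodule.span 𝕜 s).starProjection ∘L x) ζ‖
      = ⨅ z : Submodule.span 𝕜 s, ‖x ζ - z‖ := Submodule.starProjection_minimal _
    _ ≤ ‖x ζ - y‖ := ciInf_le ⟨0, Set.forall_mem_range.mpr fun _ => norm_nonneg _⟩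
      (⟨y, Submodule.subset_span hy⟩ : Submodule.span 𝕜 s)
    _ ≤ ε := (mem_ball_iff_norm.mp hxy).le

theorem IsCompactOperator.mem_closure_span_rankOne [CompleteSpace E] [CompleteSpace F]
    {x : E →L[𝕜] F} (hx : IsCompactOperator x) :
    x ∈ closure (Submodule.span 𝕜 (Set.range fun p : F × E => rankOne 𝕜 p.1 p.2) :
      Set (E →L[𝕜] F)) := by
  refine Metric.mem_closure_iff.mpr fun ε hε => ?_
  obtain ⟨K, _, hK⟩ := hx.exists_norm_sub_starProjection_comp_le (half_pos hε)
  exact ⟨_, K.starProjection_comp_mem_span_rankOne x, by rw [dist_eq_norm]; linarith⟩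

end CompactOperator

section Averaging

variable {G : Type*} [Group G] {E : Type*} [NormedAddCommGroup E] [NormedSpace ℂ E]

theorem conj_eq_self_of_commute {γ : G → E →L[ℂ] E} (hone : γ 1 = ContinuousLinearMap.id ℂ E)
    (hmul : ∀ s t, γ (s * t) = γ s ∘L γ t) {z : E →L[ℂ] E} (hz : ∀ t, γ t ∘L z = z ∘L γ t)
    (t : G) : γ t ∘L z ∘L γ t⁻¹ = z := by
  rw [← comp_assoc, hz, comp_assoc, ← hmul, mul_inv_cancel, hone, comp_id]

variable [MeasurableSpace G] (μ : Measure G) (γ : G → E →L[ℂ] E)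

/-- The Bochner integral is `0` when the orbit `t ↦ γ t ∘L z ∘L γ t⁻¹` is not integrable. -/
noncomputable def conjAverage (z : E →L[ℂ] E) : E →L[ℂ] E := ∫ t, γ t ∘L z ∘L γ t⁻¹ ∂μ

variable {μ γ}

theorem MeasureTheory.Integrable.conj_add {z w : E →L[ℂ] E}
    (hz : Integrable (fun t => γ t ∘L z ∘L γ t⁻¹) μ)
    (hw : Integrable (fun t => γ t ∘L w ∘L γ t⁻¹) μ) :
    Integrable (fun t => γ t ∘L (z + w) ∘L γ t⁻¹) μ := by
  simp only [add_comp, comp_add]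
  exact Integrable.add (ε' := E →L[ℂ] E) hz hw

theorem MeasureTheory.Integrable.conj_smul {z : E →L[ℂ] E}
    (hz : Integrable (fun t => γ t ∘L z ∘L γ t⁻¹) μ) (c : ℂ) :
    Integrable (fun t => γ t ∘L (c • z) ∘L γ t⁻¹) μ := by
  simp only [smul_comp, comp_smulₛₗ, RingHom.id_apply]
  exact hz.smul c

theorem conjAverage_add {z w : E →L[ℂ] E}
    (hz : Integrable (fun t => γ t ∘L z ∘L γ t⁻¹) μ)
    (hw : Integrable (fun t => γ t ∘L w ∘L γ t⁻¹) μ) :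
    conjAverage μ γ (z + w) = conjAverage μ γ z + conjAverage μ γ w := by
  simp only [conjAverage, add_comp, comp_add]
  exact integral_add hz hw

theorem conjAverage_sub {z w : E →L[ℂ] E}
    (hz : Integrable (fun t => γ t ∘L z ∘L γ t⁻¹) μ)
    (hw : Integrable (fun t => γ t ∘L w ∘L γ t⁻¹) μ) :
    conjAverage μ γ (z - w) = conjAverage μ γ z - conjAverage μ γ w := by
  simp only [conjAverage, sub_comp, comp_sub]
  exact integral_sub hz hw

theorem conjAverage_smul (c : ℂ) (z : E →L[ℂ] E) :
    conjAverage μ γ (c • z) = c • conjAverage μ γ z := by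
  simp only [conjAverage, smul_comp, comp_smul]
  exact integral_smul c _

theorem conjAverage_mem_span_image {R : Set (E →L[ℂ] E)}
    (hR : ∀ z ∈ R, Integrable (fun t => γ t ∘L z ∘L γ t⁻¹) μ) {z : E →L[ℂ] E}
    (hz : z ∈ Submodule.span ℂ R) :
    Integrable (fun t => γ t ∘L z ∘L γ t⁻¹) μ ∧
      conjAverage μ γ z ∈ Submodule.span ℂ (conjAverage μ γ '' R) := by
  induction hz using Submodule.span_induction with
  | mem z hz => exact ⟨hR z hz, Submodule.subset_span ⟨z, hz, rfl⟩⟩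
  | zero =>
    simp only [zero_comp, comp_zero, conjAverage, integral_zero]
    exact ⟨integrable_zero G (E →L[ℂ] E) μ, Submodule.zero_mem _⟩
  | add z w _ _ hz hw =>
    refine ⟨hz.1.conj_add hw.1, ?_⟩
    rw [conjAverage_add hz.1 hw.1]
    exact Submodule.add_mem _ hz.2 hw.2
  | smul c z _ hz =>
    refine ⟨hz.1.conj_smul c, ?_⟩
    rw [conjAverage_smul]
    exact Submodule.smul_mem _ c hz.2

theorem norm_conjAverage_le [IsProbabilityMeasure μ] (hγ : ∀ t, ‖γ t‖ ≤ 1) (z : E →L[ℂ] E) :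
    ‖conjAverage μ γ z‖ ≤ ‖z‖ := by
  have hbound : ∀ t, ‖γ t ∘L z ∘L γ t⁻¹‖ ≤ ‖z‖ := fun t =>
    calc ‖γ t ∘L z ∘L γ t⁻¹‖ ≤ ‖γ t‖ * (‖z‖ * ‖γ t⁻¹‖) :=
          (opNorm_comp_le _ _).trans (by gcongr; exact opNorm_comp_le _ _)
      _ ≤ 1 * (‖z‖ * 1) := by gcongr <;> exact hγ _
      _ = ‖z‖ := by ring
  simpa [conjAverage] using norm_integral_le_of_norm_le_const (ae_of_all μ hbound)

theorem conjAverage_eq_self_of_commute [CompleteSpace E] [IsProbabilityMeasure μ]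
    (hone : γ 1 = ContinuousLinearMap.id ℂ E) (hmul : ∀ s t, γ (s * t) = γ s ∘L γ t)
    {z : E →L[ℂ] E} (hz : ∀ t, γ t ∘L z = z ∘L γ t) :
    conjAverage μ γ z = z := by
  simp [conjAverage, conj_eq_self_of_commute hone hmul hz]

theorem comp_conjAverage [CompleteSpace E] [MeasurableMul G] [μ.IsMulLeftInvariant]
    (hmul : ∀ s t, γ (s * t) = γ s ∘L γ t) {z : E →L[ℂ] E}
    (hz : Integrable (fun t => γ t ∘L z ∘L γ t⁻¹) μ) (s : G) :
    γ s ∘L conjAverage μ γ z = conjAverage μ γ z ∘L γ s := by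
  have hshift : ∀ t, γ s ∘L γ t ∘L z ∘L γ t⁻¹ = (γ (s * t) ∘L z ∘L γ (s * t)⁻¹) ∘L γ s := by
    intro t
    rw [hmul s t, comp_assoc, comp_assoc, comp_assoc, ← hmul, mul_inv_rev, inv_mul_cancel_right]
  calc γ s ∘L conjAverage μ γ z = ∫ t, γ s ∘L γ t ∘L z ∘L γ t⁻¹ ∂μ :=
        ((compL ℂ E E E (γ s)).integral_comp_comm hz).symm
    _ = ∫ t, (γ t ∘L z ∘L γ t⁻¹) ∘L γ s ∂μ := by
        simp only [hshift]
        exact integral_mul_left_eq_self (fun t => (γ t ∘L z ∘L γ t⁻¹) ∘L γ s) s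
    _ = conjAverage μ γ z ∘L γ s := ((compL ℂ E E E).flip (γ s)).integral_comp_comm hz

theorem isCompactOperator_conjAverage [CompleteSpace E] [IsProbabilityMeasure μ]
    {z : E →L[ℂ] E} (hz : Integrable (fun t => γ t ∘L z ∘L γ t⁻¹) μ)
    (hcpt : ∀ t, IsCompactOperator (γ t ∘L z ∘L γ t⁻¹)) :
    IsCompactOperator (conjAverage μ γ z) :=
  ((compactOperator (RingHom.id ℂ) E E).restrictScalars ℝ).convex.integral_mem
    isClosed_setOfPred_isCompactOperator (Filter.Eventually.of_forall hcpt) hz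

end Averaging

section UnitaryRepresentation

variable {H : Type*} [NormedAddCommGroup H] [InnerProductSpace ℂ H]

theorem norm_le_one_of_inner_map_map {u : H →L[ℂ] H}
    (hu : ∀ ξ η, inner ℂ (u ξ) (u η) = inner ℂ ξ η) : ‖u‖ ≤ 1 :=
  opNorm_le_bound _ zero_le_one fun ζ => by
    rw [one_mul]
    exact ((u.toLinearMap.isometryOfInner hu).norm_map ζ).le

theorem adjoint_eq_of_inner_map_map [CompleteSpace H] {u v : H →L[ℂ] H}
    (hu : ∀ ξ η, inner ℂ (u ξ) (u η) = inner ℂ ξ η) (huv : u ∘L v = ContinuousLinearMap.id ℂ H) :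
    adjoint v = u := by
  refine ((eq_adjoint_iff u v).mpr fun ξ ζ => ?_).symm
  rw [← hu ξ (v ζ), ← comp_apply u v, huv, id_apply]

variable {G : Type*} [Group G] {γ : G → H →L[ℂ] H}

theorem conj_rankOne [CompleteSpace H] (hone : γ 1 = ContinuousLinearMap.id ℂ H)
    (hmul : ∀ s t, γ (s * t) = γ s ∘L γ t) (hinn : ∀ t ξ η, inner ℂ (γ t ξ) (γ t η) = inner ℂ ξ η)
    (t : G) (ξ η : H) : γ t ∘L rankOne ℂ ξ η ∘L γ t⁻¹ = rankOne ℂ (γ t ξ) (γ t η) := by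
  rw [← comp_assoc, comp_rankOne, rankOne_comp,
    adjoint_eq_of_inner_map_map (hinn t) (by rw [← hmul, mul_inv_cancel, hone])]

variable [TopologicalSpace G] [MeasurableSpace G] {μ : Measure G}

theorem integrable_conj_rankOne [CompleteSpace H] [CompactSpace G] [OpensMeasurableSpace G]
    [IsFiniteMeasure μ] (hone : γ 1 = ContinuousLinearMap.id ℂ H)
    (hmul : ∀ s t, γ (s * t) = γ s ∘L γ t) (hinn : ∀ t ξ η, inner ℂ (γ t ξ) (γ t η) = inner ℂ ξ η)
    (hcont : ∀ ξ : H, Continuous fun t => γ t ξ) (ξ η : H) :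
    Integrable (fun t => γ t ∘L rankOne ℂ ξ η ∘L γ t⁻¹) μ := by
  simp only [conj_rankOne hone hmul hinn]
  -- `rankOne` is conjugate-linear in its second argument, out of reach of `Continuous.clm_apply`.
  have hrankOne : Continuous fun t => smulRightL ℂ H H (innerSL ℂ (γ t η)) (γ t ξ) :=
    ((smulRightL ℂ H H).continuous.comp ((innerSL ℂ).continuous.comp (hcont η))).clm_apply
      (hcont ξ)
  exact hrankOne.integrable_of_hasCompactSupport (.of_compactSpace _)

theorem closure_span_conjAverage_rankOne_subset [CompleteSpace H] [ContinuousMul G]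
    [BorelSpace G] [CompactSpace G] [IsProbabilityMeasure μ] [μ.IsMulLeftInvariant]
    (hone : γ 1 = ContinuousLinearMap.id ℂ H) (hmul : ∀ s t, γ (s * t) = γ s ∘L γ t)
    (hinn : ∀ t ξ η, inner ℂ (γ t ξ) (γ t η) = inner ℂ ξ η)
    (hcont : ∀ ξ : H, Continuous fun t => γ t ξ) :
    closure (Submodule.span ℂ (conjAverage μ γ '' Set.range fun p : H × H => rankOne ℂ p.1 p.2) :
      Set (H →L[ℂ] H)) ⊆ {x : H →L[ℂ] H | IsCompactOperator x ∧ ∀ t, γ t ∘L x = x ∘L γ t} := by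
  let T := compactOperator (RingHom.id ℂ) H H ⊓
    (Subalgebra.centralizer ℂ (Set.range γ)).toSubmodule
  have hT : (T : Set (H →L[ℂ] H)) =
      {x : H →L[ℂ] H | IsCompactOperator x ∧ ∀ t, γ t ∘L x = x ∘L γ t} := by
    ext x
    simp only [T, SetLike.mem_coe, Submodule.mem_inf, Subalgebra.mem_toSubmodule,
      Subalgebra.mem_centralizer_iff, Set.forall_mem_range, mul_def]
    rfl
  rw [← hT]
  refine closure_minimal (Submodule.span_le.mpr ?_) ?_
  · rintro _ ⟨_, ⟨⟨ξ, η⟩, rfl⟩, rfl⟩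
    have hint := integrable_conj_rankOne (μ := μ) hone hmul hinn hcont ξ η
    rw [hT]
    refine ⟨isCompactOperator_conjAverage hint fun t => ?_, comp_conjAverage hmul hint⟩
    rw [conj_rankOne hone hmul hinn]
    exact isCompactOperator_rankOne _ _
  · exact isClosed_setOfPred_isCompactOperator.inter (Set.isClosed_centralizer _)

theorem mem_closure_span_conjAverage_rankOne [CompleteSpace H] [OpensMeasurableSpace G]
    [CompactSpace G] [IsProbabilityMeasure μ] (hone : γ 1 = ContinuousLinearMap.id ℂ H)
    (hmul : ∀ s t, γ (s * t) = γ s ∘L γ t) (hinn : ∀ t ξ η, inner ℂ (γ t ξ) (γ t η) = inner ℂ ξ η)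
    (hcont : ∀ ξ : H, Continuous fun t => γ t ξ) {x : H →L[ℂ] H} (hx : IsCompactOperator x)
    (hfix : ∀ t, γ t ∘L x = x ∘L γ t) :
    x ∈ closure
      (Submodule.span ℂ (conjAverage μ γ '' Set.range fun p : H × H => rankOne ℂ p.1 p.2) :
        Set (H →L[ℂ] H)) := by
  refine Metric.mem_closure_iff.mpr fun ε hε => ?_
  obtain ⟨F, hF, hxF⟩ := Metric.mem_closure_iff.mp hx.mem_closure_span_rankOne ε hε
  obtain ⟨hFint, hFmem⟩ := conjAverage_mem_span_image (μ := μ) (γ := γ)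
    (by rintro _ ⟨⟨ξ, η⟩, rfl⟩; exact integrable_conj_rankOne hone hmul hinn hcont ξ η) hF
  have hxint : Integrable (fun t => γ t ∘L x ∘L γ t⁻¹) μ := by
    simp only [conj_eq_self_of_commute hone hmul hfix]
    exact integrable_const x
  refine ⟨_, hFmem, ?_⟩
  calc dist x (conjAverage μ γ F)
      = ‖conjAverage μ γ (x - F)‖ := by
        rw [dist_eq_norm, conjAverage_sub hxint hFint,
          conjAverage_eq_self_of_commute hone hmul hfix]
    _ ≤ ‖x - F‖ := norm_conjAverage_le (fun t => norm_le_one_of_inner_map_map (hinn t)) _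
    _ < ε := by rwa [← dist_eq_norm]

end UnitaryRepresentation

theorem stmt19_general
    {G : Type*} [Group G] [TopologicalSpace G] [IsTopologicalGroup G] [CompactSpace G]
    [MeasurableSpace G] [BorelSpace G]
    (μ : Measure G) [μ.IsHaarMeasure] [IsProbabilityMeasure μ]
    {H : Type*} [NormedAddCommGroup H] [InnerProductSpace ℂ H] [CompleteSpace H]
    (γ : G → H →L[ℂ] H)
    (hone : γ 1 = ContinuousLinearMap.id ℂ H)
    (hmul : ∀ s t : G, γ (s * t) = (γ s).comp (γ t))
    (hinn : ∀ (t : G) (ξ η : H), (inner ℂ (γ t ξ) (γ t η) : ℂ) = inner ℂ ξ η)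
    (hcont : ∀ ξ : H, Continuous fun t => γ t ξ) :
    closure (Submodule.span ℂ {x : H →L[ℂ] H | ∃ ξ η : H,
        x = ∫ t, (γ t).comp ((((innerSL ℂ) η).smulRight ξ).comp (γ t⁻¹)) ∂μ} :
      Set (H →L[ℂ] H))
    = {x : H →L[ℂ] H | IsCompactOperator ⇑x ∧ ∀ t : G, (γ t).comp x = x.comp (γ t)} := by
  have hS : {x : H →L[ℂ] H | ∃ ξ η : H,
      x = ∫ t, (γ t).comp ((((innerSL ℂ) η).smulRight ξ).comp (γ t⁻¹)) ∂μ} =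
      conjAverage μ γ '' Set.range fun p : H × H => rankOne ℂ p.1 p.2 := by
    ext x
    simp [conjAverage, rankOne_def, eq_comm]
  rw [hS]
  exact (closure_span_conjAverage_rankOne_subset hone hmul hinn hcont).antisymm
    fun x hx => mem_closure_span_conjAverage_rankOne hone hmul hinn hcont hx.1 hx.2

/-- For a compact group `G` with normalized Haar measure `μ` and a strongly continuous
unitary representation `γ` on a Hilbert space `H`, the closed linear span of the averaged
rank-one operators `∫ γ_t∘|ξ⟩⟨η|∘γ_{t⁻¹} dμ(t)` (`ξ, η ∈ H`) equals the fixed point algebra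
`{x ∈ K(H) : γ_t∘x = x∘γ_t for all t}` of compact operators. -/
theorem stmt19
    {G : Type*} [Group G] [TopologicalSpace G] [IsTopologicalGroup G] [CompactSpace G]
    [MeasurableSpace G] [BorelSpace G] [T2Space G]
    (μ : Measure G) [μ.IsHaarMeasure] [IsProbabilityMeasure μ]
    {H : Type*} [NormedAddCommGroup H] [InnerProductSpace ℂ H] [CompleteSpace H]
    (γ : G → H →L[ℂ] H)
    (hone : γ 1 = ContinuousLinearMap.id ℂ H)
    (hmul : ∀ s t : G, γ (s * t) = (γ s).comp (γ t))
    (hinn : ∀ (t : G) (ξ η : H), (inner ℂ (γ t ξ) (γ t η) : ℂ) = inner ℂ ξ η)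
    (hcont : ∀ ξ : H, Continuous fun t => γ t ξ) :
    closure (Submodule.span ℂ {x : H →L[ℂ] H | ∃ ξ η : H,
        x = ∫ t, (γ t).comp ((((innerSL ℂ) η).smulRight ξ).comp (γ t⁻¹)) ∂μ} :
      Set (H →L[ℂ] H))
    = {x : H →L[ℂ] H | IsCompactOperator ⇑x ∧ ∀ t : G, (γ t).comp x = x.comp (γ t)} :=
  stmt19_general μ γ hone hmul hinn hcont
end
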